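/- arXiv:1907.01009 — 4 statements merged into one kernel-verified Lean document; each statement's English description precedes it below -/
import Mathlib

section
/- Let G ≤ U_d be the group of d×d generalized permutation matrices whose nonzero entries are s-th roots of unity (for a fixed integer s ≥ 2), with its uniform (Haar) probability measure. Then for all 0 ≤ k ≤ d and all functions p : [k] → [d], the sum over σ ∈ S_k of sgn(σ) times the expectation over U = (u_{ij}) ∈ G of ∏_{i=1}^k u_{i p(i)} · conj(u_{σ(i) p(i)}) equals (d-k)!/d! if p is injective, and 0 otherwise. -/
open Finset Complex

/-- The generalized permutation matrix `D·P` whose nonzero entries are the `s`-th roots of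
unity `exp(2πi·ε(i)/s)`, with underlying permutation `τ`. -/
noncomputable def rootsPermMatrix {d : ℕ} (s : ℕ) (ε : Fin d → ZMod s)
    (τ : Equiv.Perm (Fin d)) : Matrix (Fin d) (Fin d) ℂ :=
  fun i j => if i = τ j then Complex.exp (2 * Real.pi * Complex.I * ((ε i).val : ℂ) / s) else 0

/-- Counting permutations extending a prescribed injection. -/
lemma card_perm_extend {d k : ℕ} (hk : k ≤ d) (p : Fin k → Fin d)
    (hp : Function.Injective p) :
    Fintype.card {τ : Equiv.Perm (Fin d) // ∀ i, τ (p i) = Fin.castLE hk i}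
      = Nat.factorial (d - k) := by
  classical
  set q : Fin k → Fin d := fun i => Fin.castLE hk i with hq
  have hqinj : Function.Injective q := fun a b h => Fin.castLE_injective hk h
  have hcardp : Fintype.card {x // x ∈ Set.range p} = k := by
    rw [Set.card_range_of_injective hp, Fintype.card_fin]
  have hcardq : Fintype.card {x // x ∈ Set.range q} = k := by
    rw [Set.card_range_of_injective hqinj, Fintype.card_fin]
  have hcomplp : Fintype.card {x // x ∉ Set.range p} = d - k := by
    rw [Fintype.card_subtype_compl, hcardp, Fintype.card_fin]
  have hcomplq : Fintype.card {x // x ∉ Set.range q} = d - k := by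
    rw [Fintype.card_subtype_compl, hcardq, Fintype.card_fin]
  let e : {x // x ∈ Set.range p} ≃ {x // x ∈ Set.range q} :=
    (Equiv.ofInjective p hp).symm.trans (Equiv.ofInjective q hqinj)
  let ec : {x // x ∉ Set.range p} ≃ {x // x ∉ Set.range q} :=
    Fintype.equivOfCardEq (by rw [hcomplp, hcomplq])
  let τ₀ : Equiv.Perm (Fin d) :=
    (Equiv.sumCompl (· ∈ Set.range p)).symm.trans
      ((e.sumCongr ec).trans (Equiv.sumCompl (· ∈ Set.range q)))
  have hτ₀ : ∀ i, τ₀ (p i) = q i := by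
    intro i
    show (Equiv.sumCompl (· ∈ Set.range q))
        ((e.sumCongr ec) ((Equiv.sumCompl (· ∈ Set.range p)).symm (p i))) = q i
    rw [Equiv.sumCompl_symm_apply_of_pos ⟨i, rfl⟩]
    simp only [Equiv.sumCongr_apply, Sum.map_inl, Equiv.sumCompl_apply_inl]
    show ((Equiv.ofInjective q hqinj) ((Equiv.ofInjective p hp).symm ⟨p i, ⟨i, rfl⟩⟩) : Fin d) = q i
    have : (Equiv.ofInjective p hp).symm ⟨p i, ⟨i, rfl⟩⟩ = i := by
      exact Equiv.ofInjective_symm_apply hp i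
    rw [this]
    rfl
  let eAB : {τ : Equiv.Perm (Fin d) // ∀ i, τ (p i) = q i} ≃
      {ρ : Equiv.Perm (Fin d) // ∀ i, ρ (p i) = p i} :=
    { toFun := fun τ => ⟨τ₀⁻¹ * τ.1, fun i => by
        simp only [Equiv.Perm.mul_apply, τ.2 i, ← hτ₀ i, Equiv.Perm.inv_def, Equiv.symm_apply_apply]⟩
      invFun := fun ρ => ⟨τ₀ * ρ.1, fun i => by
        simp only [Equiv.Perm.mul_apply, ρ.2 i, hτ₀ i]⟩
      left_inv := fun τ => by
        apply Subtype.ext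
        simp [mul_assoc]
      right_inv := fun ρ => by
        apply Subtype.ext
        simp [← mul_assoc] }
  let eBC : {ρ : Equiv.Perm (Fin d) // ∀ i, ρ (p i) = p i} ≃
      {f : Equiv.Perm (Fin d) // ∀ a, ¬(a ∉ Set.range p) → f a = a} :=
    Equiv.subtypeEquivRight (fun f =>
      ⟨fun h a ha => by obtain ⟨i, rfl⟩ := not_not.1 ha; exact h i,
       fun h i => h (p i) (not_not.2 ⟨i, rfl⟩)⟩)
  calc Fintype.card {τ : Equiv.Perm (Fin d) // ∀ i, τ (p i) = Fin.castLE hk i}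
      = Fintype.card (Equiv.Perm {x // x ∉ Set.range p}) :=
        Fintype.card_congr (eAB.trans (eBC.trans
          (Equiv.Perm.subtypeEquivSubtypePerm (fun a => a ∉ Set.range p)).symm))
    _ = (Fintype.card {x // x ∉ Set.range p}).factorial := Fintype.card_perm
    _ = Nat.factorial (d - k) := by rw [hcomplp]

/-- The group `Ẑ_s ≀ S_d` of `d × d` generalized permutation matrices whose nonzero entries
are `s`-th roots of unity has the quadrature property. -/
theorem rootsOfUnityPerm_quadrature {d k : ℕ} (s : ℕ) [NeZero s] (hs : 2 ≤ s)
    (hk : k ≤ d) (p : Fin k → Fin d) :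
    ∑ σ : Equiv.Perm (Fin k), (Equiv.Perm.sign σ : ℂ) *
      (((s : ℂ) ^ d * (Nat.factorial d : ℂ))⁻¹ *
        ∑ ε : Fin d → ZMod s, ∑ τ : Equiv.Perm (Fin d),
          ∏ i : Fin k,
            rootsPermMatrix s ε τ (Fin.castLE hk i) (p i) *
              (starRingEnd ℂ) (rootsPermMatrix s ε τ (Fin.castLE hk (σ i)) (p i)))
      = if Function.Injective p then
          (Nat.factorial (d - k) : ℂ) / (Nat.factorial d : ℂ) else 0 := by
  classical
  have key : ∀ (σ : Equiv.Perm (Fin k)) (ε : Fin d → ZMod s) (τ : Equiv.Perm (Fin d)),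
      (∏ i : Fin k,
        rootsPermMatrix s ε τ (Fin.castLE hk i) (p i) *
          (starRingEnd ℂ) (rootsPermMatrix s ε τ (Fin.castLE hk (σ i)) (p i)))
      = if (σ = 1 ∧ ∀ i, τ (p i) = Fin.castLE hk i) then 1 else 0 := by
    intro σ ε τ
    by_cases h : σ = 1 ∧ ∀ i, τ (p i) = Fin.castLE hk i
    · rw [if_pos h]
      obtain ⟨rfl, h2⟩ := h
      apply Finset.prod_eq_one
      intro i _
      simp only [Equiv.Perm.one_apply]
      unfold rootsPermMatrix
      rw [if_pos (h2 i).symm]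
      set z : ℂ := 2 * Real.pi * Complex.I * ((ε (Fin.castLE hk i)).val : ℂ) / s with hz
      have hconj : (starRingEnd ℂ) z = -z := by
        rw [hz]
        simp only [map_div₀, map_mul, Complex.conj_I, map_natCast, map_ofNat]
        rw [Complex.conj_ofReal]
        ring
      rw [← Complex.exp_conj, hconj, ← Complex.exp_add, add_neg_cancel, Complex.exp_zero]
    · rw [if_neg h]
      have hex : ∃ i, Fin.castLE hk i ≠ τ (p i) ∨ Fin.castLE hk (σ i) ≠ τ (p i) := by
        by_contra hc
        push_neg at hc
        apply h
        constructor
        · apply Equiv.ext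
          intro i
          rw [Equiv.Perm.one_apply]
          have h1 := (hc i).1
          have h2 := (hc i).2
          have : Fin.castLE hk (σ i) = Fin.castLE hk i := h2.trans h1.symm
          exact Fin.castLE_injective hk this
        · intro i
          exact (hc i).1.symm
      obtain ⟨i, hi⟩ := hex
      refine Finset.prod_eq_zero (Finset.mem_univ i) ?_
      rcases hi with hi | hi
      · unfold rootsPermMatrix
        rw [if_neg hi, zero_mul]
      · unfold rootsPermMatrix
        rw [if_neg hi, map_zero, mul_zero]
  have hsum : ∀ σ : Equiv.Perm (Fin k),
      (∑ ε : Fin d → ZMod s, ∑ τ : Equiv.Perm (Fin d),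
        ∏ i : Fin k,
          rootsPermMatrix s ε τ (Fin.castLE hk i) (p i) *
            (starRingEnd ℂ) (rootsPermMatrix s ε τ (Fin.castLE hk (σ i)) (p i)))
      = if σ = 1 then ((s : ℂ) ^ d) *
          (Fintype.card {τ : Equiv.Perm (Fin d) // ∀ i, τ (p i) = Fin.castLE hk i} : ℂ)
        else 0 := by
    intro σ
    by_cases hσ : σ = 1
    · rw [if_pos hσ]
      subst hσ
      have : ∀ ε : Fin d → ZMod s, ∑ τ : Equiv.Perm (Fin d),
          (∏ i : Fin k,
            rootsPermMatrix s ε τ (Fin.castLE hk i) (p i) *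
              (starRingEnd ℂ) (rootsPermMatrix s ε τ (Fin.castLE hk ((1 : Equiv.Perm (Fin k)) i)) (p i)))
          = (Fintype.card {τ : Equiv.Perm (Fin d) // ∀ i, τ (p i) = Fin.castLE hk i} : ℂ) := by
        intro ε
        rw [Fintype.card_subtype]
        rw [Finset.sum_congr rfl (fun τ _ => key 1 ε τ)]
        simp [Finset.sum_boole]
      rw [Finset.sum_congr rfl (fun ε _ => this ε)]
      rw [Finset.sum_const, nsmul_eq_mul]
      congr 1
      simp [Fintype.card_fun, ZMod.card]
    · rw [if_neg hσ]
      rw [Finset.sum_congr rfl (fun ε _ => Finset.sum_congr rfl (fun τ _ => key σ ε τ))]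
      simp [hσ]
  rw [Finset.sum_congr rfl (fun σ _ => by rw [hsum σ])]
  rw [Finset.sum_eq_single (1 : Equiv.Perm (Fin k))]
  · simp only [if_pos rfl, Equiv.Perm.sign_one, Units.val_one, Int.cast_one, one_mul]
    have hs0 : (s : ℂ) ≠ 0 := Nat.cast_ne_zero.2 (NeZero.ne s)
    have hd0 : ((Nat.factorial d : ℕ) : ℂ) ≠ 0 := Nat.cast_ne_zero.2 (Nat.factorial_ne_zero d)
    by_cases hp : Function.Injective p
    · rw [if_pos hp, card_perm_extend hk p hp]
      field_simp
      simp
    · rw [if_neg hp]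
      have : Fintype.card {τ : Equiv.Perm (Fin d) // ∀ i, τ (p i) = Fin.castLE hk i} = 0 := by
        rw [Fintype.card_eq_zero_iff]
        constructor
        intro ⟨τ, hτ⟩
        apply hp
        intro a b hab
        have : Fin.castLE hk a = Fin.castLE hk b := by rw [← hτ a, ← hτ b, hab]
        exact Fin.castLE_injective hk this
      rw [this]
      simp
  · intro σ _ hσ
    rw [if_neg hσ]
    simp
  · intro h
    exact absurd (Finset.mem_univ 1) h
end

section
/- Let G ≤ U_d be the group of d×d signed permutation matrices with uniform probability measure. Then for all 0 ≤ k ≤ d and all p : [k] → [d], the sum over σ ∈ S_k of sgn(σ) times the expectation over U = (u_{ij}) ∈ G of ∏_{i=1}^k u_{i p(i)} u_{σ(i) p(i)} equals (d-k)!/d! if p is injective, and 0 otherwise. -/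
open Finset

/-- The signed permutation matrix `D·P` with signs `ε` (true = `1`, false = `-1`) and
permutation `τ`. -/
def signedPermMatrix {d : ℕ} (ε : Fin d → Bool) (τ : Equiv.Perm (Fin d)) :
    Matrix (Fin d) (Fin d) ℝ :=
  fun i j => if i = τ j then (if ε i then (1 : ℝ) else -1) else 0

/-!
Every column of a signed permutation matrix has exactly one nonzero entry, and it squares to `1`.
Hence for `σ ≠ 1` some factor `u_{i p(i)} u_{σ(i) p(i)}` pairs two different rows of one column
and vanishes, while for `σ = 1` the product is the indicator that `τ` sends `p(i)` to `i` for
all `i`. The signs drop out, and the permutations of `Fin d` extending an injection of `Fin k`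
are a coset of the pointwise stabiliser of its range, of size `(d - k)!`.
-/

open Function Equiv Nat

section PermExtending

variable {ι α : Type*} [Fintype ι] [Fintype α] [DecidableEq α]

theorem Equiv.Perm.card_fixing_range {p : ι → α} (hp : Injective p) :
    Fintype.card {τ : Perm α // ∀ i, τ (p i) = p i} = (Fintype.card α - Fintype.card ι)! := by
  have hfix : ∀ τ : Perm α, (∀ i, τ (p i) = p i) ↔ ∀ a, ¬a ∉ Set.range p → τ a = a := by
    simp
  rw [Fintype.card_congr ((Equiv.subtypeEquivRight hfix).trans
      (Perm.subtypeEquivSubtypePerm (· ∉ Set.range p)).symm),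
    Fintype.card_perm, Fintype.card_subtype_compl, Set.card_range_of_injective hp]

theorem Equiv.Perm.card_extending {p q : ι → α} (hp : Injective p) (hq : Injective q) :
    Fintype.card {τ : Perm α // ∀ i, τ (p i) = q i} = (Fintype.card α - Fintype.card ι)! := by
  obtain ⟨τ₀, hτ₀⟩ := Perm.exists_extending_pair p q hp hq
  have hshift : ∀ τ : Perm α, (∀ i, τ (p i) = q i) ↔ ∀ i, (τ₀⁻¹ * τ) (p i) = p i := by
    simp only [Perm.mul_apply, Perm.inv_eq_iff_eq, hτ₀, implies_true]
  rw [Fintype.card_congr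
      ((Equiv.mulLeft τ₀⁻¹).subtypeEquiv (q := fun τ => ∀ i, τ (p i) = p i) hshift),
    Perm.card_fixing_range hp]

theorem Equiv.Perm.card_filter_extending {p q : ι → α} (hq : Injective q) :
    #{τ : Perm α | ∀ i, τ (p i) = q i} =
      if Injective p then (Fintype.card α - Fintype.card ι)! else 0 := by
  rw [← Fintype.card_subtype]
  split_ifs with hp
  · exact Perm.card_extending hp hq
  · refine Fintype.card_eq_zero_iff.mpr ⟨fun ⟨τ, hτ⟩ => hp fun i j hij => hq ?_⟩
    rw [← hτ i, ← hτ j, hij]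

end PermExtending

section SignedPermMatrix

variable {d : ℕ} (ε : Fin d → Bool)

theorem signedPermMatrix_mul_self_apply (τ : Perm (Fin d)) (i j : Fin d) :
    signedPermMatrix ε τ i j * signedPermMatrix ε τ i j = if τ j = i then 1 else 0 := by
  unfold signedPermMatrix
  rcases eq_or_ne (τ j) i with rfl | h
  · cases ε (τ j) <;> simp
  · simp [Ne.symm h, h]

theorem signedPermMatrix_mul_apply_of_ne (τ : Perm (Fin d)) {i i' : Fin d} (h : i ≠ i')
    (j : Fin d) :
    signedPermMatrix ε τ i j * signedPermMatrix ε τ i' j = 0 := by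
  unfold signedPermMatrix
  by_cases hi : i = τ j
  · simp [show i' ≠ τ j from hi ▸ h.symm]
  · simp [hi]

variable {ι : Type*} [Fintype ι] {p q : ι → Fin d}

theorem sum_prod_signedPermMatrix_mul_self :
    ∑ τ : Perm (Fin d),
        ∏ i, signedPermMatrix ε τ (q i) (p i) * signedPermMatrix ε τ (q i) (p i) =
      (#{τ : Perm (Fin d) | ∀ i, τ (p i) = q i} : ℝ) := by
  simp only [signedPermMatrix_mul_self_apply, Fintype.prod_boole, Finset.sum_boole]

theorem prod_signedPermMatrix_mul_perm_of_ne_one (τ : Perm (Fin d)) (hq : Injective q)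
    {σ : Perm ι} (hσ : σ ≠ 1) :
    ∏ i, signedPermMatrix ε τ (q i) (p i) * signedPermMatrix ε τ (q (σ i)) (p i) = 0 := by
  obtain ⟨i, hi⟩ : ∃ i, σ i ≠ i := not_forall.mp fun h => hσ (Equiv.ext h)
  exact Finset.prod_eq_zero (Finset.mem_univ i)
    (signedPermMatrix_mul_apply_of_ne ε τ (hq.ne hi.symm) (p i))

end SignedPermMatrix

/-- The group of `d × d` signed permutation matrices has the quadrature property. -/
theorem signedPerm_quadrature {d k : ℕ} (hk : k ≤ d) (p : Fin k → Fin d) :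
    ∑ σ : Equiv.Perm (Fin k), (Equiv.Perm.sign σ : ℝ) *
      ((2 ^ d * Nat.factorial d : ℝ)⁻¹ *
        ∑ ε : Fin d → Bool, ∑ τ : Equiv.Perm (Fin d),
          ∏ i : Fin k,
            signedPermMatrix ε τ (Fin.castLE hk i) (p i) *
              signedPermMatrix ε τ (Fin.castLE hk (σ i)) (p i))
      = if Function.Injective p then
          (Nat.factorial (d - k) : ℝ) / (Nat.factorial d : ℝ) else 0 := by
  have hq : Injective (Fin.castLE hk) := Fin.castLE_injective hk
  rw [Fintype.sum_eq_single 1 fun σ hσ => by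
    simp [prod_signedPermMatrix_mul_perm_of_ne_one _ _ hq hσ]]
  simp only [Perm.sign_one, Units.val_one, Int.cast_one, one_mul, Perm.one_apply,
    sum_prod_signedPermMatrix_mul_self, Perm.card_filter_extending hq, Fintype.card_fin,
    Finset.sum_const, Finset.card_univ, Fintype.card_fun, Fintype.card_bool, nsmul_eq_mul,
    Nat.cast_pow, Nat.cast_ofNat]
  split_ifs
  · field_simp
  · simp
end

section
/- Let G be a compact subgroup of U_d with Haar probability measure satisfying the quadrature property. Then for diagonal matrices A = diag(a_1,...,a_d) and B = diag(b_1,...,b_d) in M_d(ℂ) and 0 ≤ k ≤ d, the expectation over U ∈ G of e_k(A U B U*) equals (k!(d-k)!/d!) e_k(A) e_k(B), where e_k denotes the k-th elementary symmetric polynomial of the eigenvalues. -/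
open Finset MeasureTheory

noncomputable instance {d : ℕ} : MeasurableSpace (Matrix.unitaryGroup (Fin d) ℂ) := borel _

instance {d : ℕ} : BorelSpace (Matrix.unitaryGroup (Fin d) ℂ) := ⟨rfl⟩

/-- The matrix of an element of a subgroup of the unitary group. -/
def mat {d : ℕ} {G : Subgroup (Matrix.unitaryGroup (Fin d) ℂ)} (U : G) :
    Matrix (Fin d) (Fin d) ℂ :=
  ((U : Matrix.unitaryGroup (Fin d) ℂ) : Matrix (Fin d) (Fin d) ℂ)

set_option maxRecDepth 4000
set_option synthInstance.maxHeartbeats 1000000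
set_option maxHeartbeats 1000000

/-- The quadrature property for a subgroup `G ≤ U_d` with measure `μ`. -/
def HasQuadrature {d : ℕ} (G : Subgroup (Matrix.unitaryGroup (Fin d) ℂ))
    (μ : Measure G) : Prop :=
  ∀ (k : ℕ) (hk : k ≤ d) (p : Fin k → Fin d),
    ∑ σ : Equiv.Perm (Fin k), (Equiv.Perm.sign σ : ℂ) *
      ∫ U : G, ∏ i : Fin k,
        (mat U (Fin.castLE hk i) (p i) *
          (starRingEnd ℂ) (mat U (Fin.castLE hk (σ i)) (p i))) ∂μ
    = if Function.Injective p then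
        (Nat.factorial (d - k) : ℂ) / (Nat.factorial d : ℂ) else 0

/-- `e_k(M)`: the sum of the principal `k × k` minors of `M`. -/
noncomputable def minorSum {d : ℕ} (k : ℕ) (M : Matrix (Fin d) (Fin d) ℂ) : ℂ :=
  ∑ S ∈ Finset.powersetCard k (Finset.univ : Finset (Fin d)),
    (M.submatrix (fun i : {x // x ∈ S} => (i : Fin d))
      (fun j : {x // x ∈ S} => (j : Fin d))).det

namespace QuadProof

variable {d : ℕ} {G : Subgroup (Matrix.unitaryGroup (Fin d) ℂ)}

instance : OpensMeasurableSpace G := Subtype.opensMeasurableSpace (G : Set (Matrix.unitaryGroup (Fin d) ℂ))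

lemma continuous_mat (i j : Fin d) : Continuous fun U : G => mat U i j := by
  have h1 : Continuous fun U : G => (U : Matrix.unitaryGroup (Fin d) ℂ) :=
    continuous_subtype_val
  have h2 : Continuous fun V : Matrix.unitaryGroup (Fin d) ℂ =>
      (V : Matrix (Fin d) (Fin d) ℂ) := continuous_subtype_val
  exact (continuous_apply j).comp ((continuous_apply i).comp (h2.comp h1))

lemma integrable_entry_prod [CompactSpace G] (μ : Measure G) [IsFiniteMeasure μ] {k : ℕ}
    (q r p : Fin k → Fin d) :
    Integrable (fun U : G =>
      ∏ i : Fin k, (mat U (q i) (p i) * (starRingEnd ℂ) (mat U (r i) (p i)))) μ := by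
  apply Continuous.integrable_of_hasCompactSupport ?_ (HasCompactSupport.of_compactSpace _)
  apply continuous_finset_prod
  intro i _
  exact (continuous_mat _ _).mul (Complex.continuous_conj.comp (continuous_mat _ _))

lemma mat_row_orthonormal (U : G) (r r' : Fin d) :
    ∑ t : Fin d, mat U r t * (starRingEnd ℂ) (mat U r' t) = if r = r' then 1 else 0 := by
  have h : mat U * star (mat U) = 1 :=
    Matrix.mem_unitaryGroup_iff.mp (U : Matrix.unitaryGroup (Fin d) ℂ).2
  have h2 : (mat U * star (mat U)) r r' = (1 : Matrix (Fin d) (Fin d) ℂ) r r' := by rw [h]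
  rw [Matrix.mul_apply, Matrix.one_apply] at h2
  simp only [Matrix.star_apply, starRingEnd_apply] at h2 ⊢
  exact h2


/-- Quadrature at level `k` with an arbitrary row map `q`. -/
def QuadAt (μ : Measure G) (k : ℕ) (q : Fin k → Fin d) : Prop :=
  ∀ p : Fin k → Fin d,
    ∑ σ : Equiv.Perm (Fin k), (Equiv.Perm.sign σ : ℂ) *
      ∫ U : G, ∏ i : Fin k,
        (mat U (q i) (p i) * (starRingEnd ℂ) (mat U (q (σ i)) (p i))) ∂μ
    = if Function.Injective p then
        (Nat.factorial (d - k) : ℂ) / (Nat.factorial d : ℂ) else 0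

lemma QuadAt.comp_perm {μ : Measure G} {k : ℕ} {q : Fin k → Fin d} (h : QuadAt μ k q)
    (π : Equiv.Perm (Fin k)) : QuadAt μ k (q ∘ π) := by
  intro p
  have hp := h (p ∘ π.symm)
  simp only [Equiv.injective_comp] at hp
  rw [← hp]
  refine Fintype.sum_equiv ((Equiv.mulLeft π).trans (Equiv.mulRight π⁻¹)) _ _ fun σ => ?_
  simp only [Equiv.trans_apply, Equiv.coe_mulLeft, Equiv.coe_mulRight]
  have hsign : Equiv.Perm.sign (π * σ * π⁻¹) = Equiv.Perm.sign σ := by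
    rw [Equiv.Perm.sign_mul, Equiv.Perm.sign_mul, Equiv.Perm.sign_inv]
    rw [mul_comm (Equiv.Perm.sign π), mul_assoc, Int.units_mul_self, mul_one]
  have hint : (fun U : G => ∏ i : Fin k,
        (mat U ((q ∘ π) i) (p i) * (starRingEnd ℂ) (mat U ((q ∘ π) (σ i)) (p i))))
      = fun U : G => ∏ i : Fin k,
        (mat U (q i) ((p ∘ π.symm) i) *
          (starRingEnd ℂ) (mat U (q ((π * σ * π⁻¹) i)) ((p ∘ π.symm) i))) := by
    funext U
    exact Fintype.prod_equiv π _ _ fun x => by simp [Equiv.Perm.mul_apply]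
  rw [hsign, hint]


lemma QuadAt.tail [CompactSpace G] {μ : Measure G} [IsFiniteMeasure μ] {k : ℕ}
    {q : Fin (k + 1) → Fin d} (hd : k + 1 ≤ d) (hinj : Function.Injective q)
    (h : QuadAt μ (k + 1) q) : QuadAt μ k (q ∘ Fin.succ) := by
  intro p
  have H : ∑ t : Fin d, ∑ σ : Equiv.Perm (Fin (k + 1)), (Equiv.Perm.sign σ : ℂ) *
        ∫ U : G, ∏ i : Fin (k + 1),
          (mat U (q i) ((Fin.cons t p : Fin (k + 1) → Fin d) i) *
            (starRingEnd ℂ) (mat U (q (σ i)) ((Fin.cons t p : Fin (k + 1) → Fin d) i))) ∂μ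
      = ∑ t : Fin d, (if Function.Injective (Fin.cons t p : Fin (k + 1) → Fin d) then
          (Nat.factorial (d - (k + 1)) : ℂ) / (Nat.factorial d : ℂ) else 0) :=
    Finset.sum_congr rfl fun t _ => h (Fin.cons t p)
  have hcount : ∑ t : Fin d, (if Function.Injective (Fin.cons t p : Fin (k + 1) → Fin d) then
          (Nat.factorial (d - (k + 1)) : ℂ) / (Nat.factorial d : ℂ) else 0)
      = if Function.Injective p then
          (Nat.factorial (d - k) : ℂ) / (Nat.factorial d : ℂ) else 0 := by
    by_cases hp : Function.Injective p
    · rw [if_pos hp]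
      have he : ∀ t : Fin d,
          (if Function.Injective (Fin.cons t p : Fin (k + 1) → Fin d) then
            (Nat.factorial (d - (k + 1)) : ℂ) / (Nat.factorial d : ℂ) else 0)
          = if t ∈ (univ : Finset (Fin d)) \ Finset.image p univ then
            (Nat.factorial (d - (k + 1)) : ℂ) / (Nat.factorial d : ℂ) else 0 := by
        intro t
        refine if_congr ?_ rfl rfl
        rw [Fin.cons_injective_iff]
        simp [hp, Set.range]
      rw [Finset.sum_congr rfl fun t _ => he t]
      rw [Finset.sum_ite_mem, Finset.univ_inter, Finset.sum_const]
      have hA : ((univ : Finset (Fin d)) \ Finset.image p univ).card = d - k := by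
        rw [Finset.card_sdiff_of_subset (Finset.subset_univ _), Finset.card_univ, Fintype.card_fin,
          Finset.card_image_of_injective _ hp, Finset.card_univ, Fintype.card_fin]
      rw [hA, nsmul_eq_mul]
      have hfact : (d - k) * Nat.factorial (d - (k + 1)) = Nat.factorial (d - k) := by
        have h1 : d - (k + 1) = (d - k) - 1 := by omega
        rw [h1, Nat.mul_factorial_pred (by omega)]
      rw [show ((d - k : ℕ) : ℂ) * ((Nat.factorial (d - (k + 1)) : ℂ) / (Nat.factorial d : ℂ))
          = ((d - k) * Nat.factorial (d - (k + 1)) : ℕ) / (Nat.factorial d : ℂ) by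
        push_cast; ring]
      rw [hfact]
    · rw [if_neg hp]
      refine Finset.sum_eq_zero fun t _ => ?_
      rw [if_neg]
      rw [Fin.cons_injective_iff]
      exact fun hc => hp hc.2
  have hστ : ∀ σ' : Equiv.Perm (Fin (k + 1)),
      ∑ t : Fin d, (Equiv.Perm.sign σ' : ℂ) *
        ∫ U : G, ∏ i : Fin (k + 1),
          (mat U (q i) ((Fin.cons t p : Fin (k + 1) → Fin d) i) *
            (starRingEnd ℂ) (mat U (q (σ' i)) ((Fin.cons t p : Fin (k + 1) → Fin d) i))) ∂μ
      = (Equiv.Perm.sign σ' : ℂ) * (if σ' 0 = 0 then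
          ∫ U : G, ∏ i : Fin k,
            (mat U (q i.succ) (p i) *
              (starRingEnd ℂ) (mat U (q (σ' i.succ)) (p i))) ∂μ else 0) := by
    intro σ'
    rw [← Finset.mul_sum]
    congr 1
    rw [← integral_finset_sum univ
      (fun t _ => integrable_entry_prod μ q (fun i => q (σ' i)) (Fin.cons t p))]
    have hpt : ∀ U : G, ∑ t : Fin d, ∏ i : Fin (k + 1),
          (mat U (q i) ((Fin.cons t p : Fin (k + 1) → Fin d) i) *
            (starRingEnd ℂ) (mat U (q (σ' i)) ((Fin.cons t p : Fin (k + 1) → Fin d) i)))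
        = if σ' 0 = 0 then ∏ i : Fin k,
            (mat U (q i.succ) (p i) *
              (starRingEnd ℂ) (mat U (q (σ' i.succ)) (p i))) else 0 := by
      intro U
      have hsplit : ∀ t : Fin d, ∏ i : Fin (k + 1),
            (mat U (q i) ((Fin.cons t p : Fin (k + 1) → Fin d) i) *
              (starRingEnd ℂ) (mat U (q (σ' i)) ((Fin.cons t p : Fin (k + 1) → Fin d) i)))
          = (mat U (q 0) t * (starRingEnd ℂ) (mat U (q (σ' 0)) t)) *
            ∏ i : Fin k, (mat U (q i.succ) (p i) *
              (starRingEnd ℂ) (mat U (q (σ' i.succ)) (p i))) := by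
        intro t
        rw [Fin.prod_univ_succ]
        simp [Fin.cons_zero, Fin.cons_succ]
      rw [Finset.sum_congr rfl fun t _ => hsplit t, ← Finset.sum_mul, mat_row_orthonormal]
      have hc : (q 0 = q (σ' 0)) ↔ (σ' 0 = 0) :=
        ⟨fun hqq => (hinj hqq).symm, fun h0 => by rw [h0]⟩
      rw [if_congr hc rfl rfl, ite_mul, one_mul, zero_mul]
    rw [show (fun U : G => ∑ t : Fin d, ∏ i : Fin (k + 1),
          (mat U (q i) ((Fin.cons t p : Fin (k + 1) → Fin d) i) *
            (starRingEnd ℂ) (mat U (q (σ' i)) ((Fin.cons t p : Fin (k + 1) → Fin d) i))))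
        = fun U : G => if σ' 0 = 0 then ∏ i : Fin k,
            (mat U (q i.succ) (p i) *
              (starRingEnd ℂ) (mat U (q (σ' i.succ)) (p i))) else 0 from funext hpt]
    by_cases h0 : σ' 0 = 0 <;> simp [h0]
  calc ∑ σ : Equiv.Perm (Fin k), (Equiv.Perm.sign σ : ℂ) *
        ∫ U : G, ∏ i : Fin k,
          (mat U ((q ∘ Fin.succ) i) (p i) *
            (starRingEnd ℂ) (mat U ((q ∘ Fin.succ) (σ i)) (p i))) ∂μ
      = ∑ t : Fin d, ∑ σ : Equiv.Perm (Fin (k + 1)), (Equiv.Perm.sign σ : ℂ) *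
        ∫ U : G, ∏ i : Fin (k + 1),
          (mat U (q i) ((Fin.cons t p : Fin (k + 1) → Fin d) i) *
            (starRingEnd ℂ) (mat U (q (σ i)) ((Fin.cons t p : Fin (k + 1) → Fin d) i))) ∂μ := by
        rw [Finset.sum_comm]
        rw [Finset.sum_congr rfl fun σ' (_ : σ' ∈ univ) => hστ σ']
        rw [← (Fintype.sum_equiv (Equiv.Perm.decomposeFin.symm)
          (fun x : Fin (k + 1) × Equiv.Perm (Fin k) =>
            (Equiv.Perm.sign (Equiv.Perm.decomposeFin.symm x) : ℂ) *
              (if (Equiv.Perm.decomposeFin.symm x) 0 = 0 then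
                ∫ U : G, ∏ i : Fin k,
                  (mat U (q i.succ) (p i) *
                    (starRingEnd ℂ) (mat U (q ((Equiv.Perm.decomposeFin.symm x) i.succ)) (p i))) ∂μ
                else 0)) _ fun x => rfl)]
        rw [Fintype.sum_prod_type]
        rw [Finset.sum_eq_single_of_mem (0 : Fin (k + 1)) (Finset.mem_univ 0)
          (fun t0 _ ht0 => Finset.sum_eq_zero fun σ _ => by
            rw [if_neg (by rw [Equiv.Perm.decomposeFin_symm_apply_zero]; exact ht0), mul_zero])]
        refine (Finset.sum_congr rfl fun σ _ => ?_).symm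
        rw [if_pos (Equiv.Perm.decomposeFin_symm_apply_zero 0 σ)]
        have hs : Equiv.Perm.sign (Equiv.Perm.decomposeFin.symm (0, σ)) = Equiv.Perm.sign σ := by
          rw [Equiv.Perm.decomposeFin.symm_sign, if_pos rfl, one_mul]
        rw [hs]
        congr 1
    _ = ∑ t : Fin d, (if Function.Injective (Fin.cons t p : Fin (k + 1) → Fin d) then
          (Nat.factorial (d - (k + 1)) : ℂ) / (Nat.factorial d : ℂ) else 0) := H
    _ = if Function.Injective p then
          (Nat.factorial (d - k) : ℂ) / (Nat.factorial d : ℂ) else 0 := hcount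


lemma quad_all [CompactSpace G] {μ : Measure G} [IsFiniteMeasure μ]
    (hq : HasQuadrature G μ) :
    ∀ n k : ℕ, k + n = d → ∀ q : Fin k → Fin d, Function.Injective q → QuadAt μ k q := by
  intro n
  induction n with
  | zero =>
    intro k hkd q hinj
    have hkd' : k = d := by omega
    subst hkd'
    have h0 : QuadAt μ k (Fin.castLE (le_refl k)) := hq k (le_refl k)
    have hbij : Function.Bijective q := Finite.injective_iff_bijective.mp hinj
    have h1 := h0.comp_perm (Equiv.ofBijective q hbij)
    have hqe : (Fin.castLE (le_refl k)) ∘ (Equiv.ofBijective q hbij) = q := by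
      funext i
      simp [Fin.castLE, Equiv.ofBijective]
    rwa [hqe] at h1
  | succ n ih =>
    intro k hkd q hinj
    have hk1 : (k + 1) + n = d := by omega
    have hex : ∃ t : Fin d, t ∉ Set.range q := by
      by_contra hcon
      push_neg at hcon
      have hsurj : Function.Surjective q := fun t => hcon t
      have := Fintype.card_le_of_surjective q hsurj
      simp [Fintype.card_fin] at this
      omega
    obtain ⟨t, ht⟩ := hex
    have hinj' : Function.Injective (Fin.cons t q : Fin (k + 1) → Fin d) :=
      Fin.cons_injective_iff.mpr ⟨ht, hinj⟩
    have h1 : QuadAt μ (k + 1) (Fin.cons t q) := ih (k + 1) hk1 _ hinj'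
    have h2 := h1.tail (by omega) hinj'
    have hqe : (Fin.cons t q : Fin (k + 1) → Fin d) ∘ Fin.succ = q := by
      funext i
      simp [Fin.cons_succ]
    rwa [hqe] at h2

lemma quadAt_of_injective [CompactSpace G] {μ : Measure G} [IsFiniteMeasure μ]
    (hq : HasQuadrature G μ) {k : ℕ} (hk : k ≤ d) {q : Fin k → Fin d}
    (hinj : Function.Injective q) : QuadAt μ k q :=
  quad_all hq (d - k) k (by omega) q hinj


lemma prod_orderEmbOfFin {k : ℕ} (S : Finset (Fin d)) (hS : S.card = k) (b : Fin d → ℂ) :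
    ∏ i : Fin k, b (S.orderEmbOfFin hS i) = ∏ i ∈ S, b i := by
  refine Finset.prod_bij (fun i _ => S.orderEmbOfFin hS i)
    (fun i _ => Finset.orderEmbOfFin_mem S hS i)
    (fun i _ j _ hij => (S.orderEmbOfFin hS).injective hij)
    (fun s hs => ?_) (fun i _ => rfl)
  have : s ∈ Set.range (S.orderEmbOfFin hS) := by
    rw [Finset.range_orderEmbOfFin]; exact hs
  obtain ⟨i, hi⟩ := this
  exact ⟨i, Finset.mem_univ i, hi⟩

lemma sum_prod_injective {k : ℕ} (b : Fin d → ℂ) :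
    ∑ p ∈ Finset.univ.filter (fun p : Fin k → Fin d => Function.Injective p), ∏ i, b (p i)
      = (Nat.factorial k : ℂ) *
          ∑ S ∈ Finset.powersetCard k (Finset.univ : Finset (Fin d)), ∏ i ∈ S, b i := by
  symm
  calc (Nat.factorial k : ℂ) *
          ∑ S ∈ Finset.powersetCard k (Finset.univ : Finset (Fin d)), ∏ i ∈ S, b i
      = ∑ S ∈ Finset.powersetCard k (Finset.univ : Finset (Fin d)),
          ∑ _σ : Equiv.Perm (Fin k), ∏ i ∈ S, b i := by
        rw [Finset.mul_sum]
        refine Finset.sum_congr rfl fun S _ => ?_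
        rw [Finset.sum_const, Finset.card_univ, Fintype.card_perm, Fintype.card_fin, nsmul_eq_mul]
    _ = ∑ x ∈ (Finset.powersetCard k (Finset.univ : Finset (Fin d))).sigma
          (fun _ => (Finset.univ : Finset (Equiv.Perm (Fin k)))), ∏ i ∈ x.1, b i := by
        rw [Finset.sum_sigma]
    _ = ∑ p ∈ Finset.univ.filter (fun p : Fin k → Fin d => Function.Injective p),
          ∏ i, b (p i) := ?_
  refine Finset.sum_bij
    (fun x hx => (x.1.orderEmbOfFin
      ((Finset.mem_powersetCard.mp (Finset.mem_sigma.mp hx).1).2 : x.1.card = k)) ∘ x.2)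
    (fun x hx => Finset.mem_filter.mpr ⟨Finset.mem_univ _,
      ((x.1.orderEmbOfFin _).injective).comp x.2.injective⟩)
    ?_ ?_ ?_
  · rintro ⟨S₁, σ₁⟩ h₁ ⟨S₂, σ₂⟩ h₂ heq
    have hc₁ : S₁.card = k := (Finset.mem_powersetCard.mp (Finset.mem_sigma.mp h₁).1).2
    have hc₂ : S₂.card = k := (Finset.mem_powersetCard.mp (Finset.mem_sigma.mp h₂).1).2
    have heq0 : ⇑(S₁.orderEmbOfFin hc₁) ∘ ⇑σ₁ = ⇑(S₂.orderEmbOfFin hc₂) ∘ ⇑σ₂ := heq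
    have hS : S₁ = S₂ := by
      apply Finset.coe_injective
      calc (S₁ : Set (Fin d)) = Set.range (⇑(S₁.orderEmbOfFin hc₁) ∘ ⇑σ₁) := by
            rw [σ₁.surjective.range_comp, Finset.range_orderEmbOfFin]
        _ = Set.range (⇑(S₂.orderEmbOfFin hc₂) ∘ ⇑σ₂) := by rw [heq0]
        _ = (S₂ : Set (Fin d)) := by
            rw [σ₂.surjective.range_comp, Finset.range_orderEmbOfFin]
    subst hS
    have hσ : σ₁ = σ₂ := by
      ext i
      have h3 : (⇑(S₁.orderEmbOfFin hc₁) ∘ ⇑σ₁) i = (⇑(S₁.orderEmbOfFin hc₂) ∘ ⇑σ₂) i :=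
        congrFun heq0 i
      have h4 := (S₁.orderEmbOfFin hc₁).injective (h3.trans rfl)
      exact congrArg Fin.val h4
    rw [hσ]
  · intro p hp
    have hpinj : Function.Injective p := (Finset.mem_filter.mp hp).2
    set S : Finset (Fin d) := Finset.image p Finset.univ with hSdef
    have hS : S.card = k := by
      rw [hSdef, Finset.card_image_of_injective _ hpinj, Finset.card_univ, Fintype.card_fin]
    have hmem : ∀ i, p i ∈ S := fun i => Finset.mem_image.mpr ⟨i, Finset.mem_univ i, rfl⟩
    have hfinj : Function.Injective (fun i => (S.orderIsoOfFin hS).symm ⟨p i, hmem i⟩) := by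
      intro i j hij
      have := congrArg (fun z => ((S.orderIsoOfFin hS) z : Fin d)) hij
      simp only [OrderIso.apply_symm_apply] at this
      exact hpinj this
    refine ⟨⟨S, Equiv.ofBijective _ (Finite.injective_iff_bijective.mp hfinj)⟩,
      Finset.mem_sigma.mpr ⟨Finset.mem_powersetCard.mpr ⟨Finset.subset_univ _, hS⟩,
        Finset.mem_univ _⟩, ?_⟩
    funext i
    show S.orderEmbOfFin _ ((S.orderIsoOfFin hS).symm ⟨p i, hmem i⟩) = p i
    rw [← Finset.coe_orderIsoOfFin_apply, OrderIso.apply_symm_apply]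
  · rintro ⟨S, σ⟩ hx
    have hc : S.card = k := (Finset.mem_powersetCard.mp (Finset.mem_sigma.mp hx).1).2
    calc ∏ i ∈ S, b i = ∏ i : Fin k, b (S.orderEmbOfFin hc i) :=
          (prod_orderEmbOfFin S hc b).symm
      _ = ∏ i : Fin k, b (S.orderEmbOfFin hc (σ i)) :=
          (Equiv.prod_comp σ (fun j => b (S.orderEmbOfFin hc j))).symm


lemma integral_det_submatrix [CompactSpace G] {μ : Measure G} [IsFiniteMeasure μ] {k : ℕ}
    {q : Fin k → Fin d} (hq : QuadAt μ k q) (a b : Fin d → ℂ) :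
    ∫ U : G,
        ((Matrix.diagonal a * mat U * Matrix.diagonal b * star (mat U)).submatrix q q).det ∂μ
      = ((∏ i : Fin k, a (q i)) * ((Nat.factorial (d - k) : ℂ) / (Nat.factorial d : ℂ))) *
          ∑ p ∈ Finset.univ.filter (fun p : Fin k → Fin d => Function.Injective p),
            ∏ i : Fin k, b (p i) := by
  have hM : ∀ (U : G) (r c' : Fin d),
      (Matrix.diagonal a * mat U * Matrix.diagonal b * star (mat U)) r c'
        = ∑ m : Fin d, a r * mat U r m * b m * (starRingEnd ℂ) (mat U c' m) := by
    intro U r c'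
    rw [Matrix.mul_apply]
    refine Finset.sum_congr rfl fun m _ => ?_
    rw [Matrix.mul_diagonal, Matrix.diagonal_mul, Matrix.star_apply, starRingEnd_apply]
  have hdet : (fun U : G =>
        ((Matrix.diagonal a * mat U * Matrix.diagonal b * star (mat U)).submatrix q q).det)
      = fun U : G => ∑ σ : Equiv.Perm (Fin k), (Equiv.Perm.sign σ : ℂ) *
          ∑ p ∈ (Finset.univ : Finset (Fin k → Fin d)),
            (((∏ i : Fin k, a (q i)) * ∏ i : Fin k, b (p i)) *
              ∏ i : Fin k, (mat U (q i) (p i) * (starRingEnd ℂ) (mat U (q (σ i)) (p i)))) := by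
    funext U
    rw [← Matrix.det_transpose, Matrix.det_apply']
    refine Finset.sum_congr rfl fun σ _ => ?_
    congr 1
    calc ∏ i : Fin k,
          ((Matrix.diagonal a * mat U * Matrix.diagonal b * star (mat U)).submatrix q q).transpose (σ i) i
        = ∏ i : Fin k, ∑ m : Fin d,
            a (q i) * mat U (q i) m * b m * (starRingEnd ℂ) (mat U (q (σ i)) m) := by
          refine Finset.prod_congr rfl fun i _ => ?_
          rw [Matrix.transpose_apply, Matrix.submatrix_apply, hM]
      _ = ∑ p ∈ Fintype.piFinset (fun _ : Fin k => (Finset.univ : Finset (Fin d))),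
            ∏ i : Fin k,
              (a (q i) * mat U (q i) (p i) * b (p i) *
                (starRingEnd ℂ) (mat U (q (σ i)) (p i))) :=
          Finset.prod_univ_sum _ _
      _ = ∑ p ∈ (Finset.univ : Finset (Fin k → Fin d)),
            (((∏ i : Fin k, a (q i)) * ∏ i : Fin k, b (p i)) *
              ∏ i : Fin k, (mat U (q i) (p i) * (starRingEnd ℂ) (mat U (q (σ i)) (p i)))) := by
          rw [Fintype.piFinset_univ]
          refine Finset.sum_congr rfl fun p _ => ?_
          rw [← Finset.prod_mul_distrib, ← Finset.prod_mul_distrib]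
          exact Finset.prod_congr rfl fun i _ => by ring
  rw [hdet]
  have hint1 : ∀ (σ : Equiv.Perm (Fin k)) (p : Fin k → Fin d),
      Integrable (fun U : G =>
        (((∏ i : Fin k, a (q i)) * ∏ i : Fin k, b (p i)) *
          ∏ i : Fin k, (mat U (q i) (p i) * (starRingEnd ℂ) (mat U (q (σ i)) (p i))))) μ :=
    fun σ p => (integrable_entry_prod μ q (fun i => q (σ i)) p).const_mul _
  rw [integral_finset_sum _ (fun σ _ =>
    ((integrable_finset_sum _ (fun p _ => hint1 σ p)).const_mul _))]
  calc ∑ σ : Equiv.Perm (Fin k), ∫ U : G, (Equiv.Perm.sign σ : ℂ) *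
          ∑ p ∈ (Finset.univ : Finset (Fin k → Fin d)),
            (((∏ i : Fin k, a (q i)) * ∏ i : Fin k, b (p i)) *
              ∏ i : Fin k, (mat U (q i) (p i) * (starRingEnd ℂ) (mat U (q (σ i)) (p i)))) ∂μ
      = ∑ σ : Equiv.Perm (Fin k), (Equiv.Perm.sign σ : ℂ) *
          ∑ p ∈ (Finset.univ : Finset (Fin k → Fin d)),
            (((∏ i : Fin k, a (q i)) * ∏ i : Fin k, b (p i)) *
              ∫ U : G,
                ∏ i : Fin k, (mat U (q i) (p i) * (starRingEnd ℂ) (mat U (q (σ i)) (p i))) ∂μ) := by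
        refine Finset.sum_congr rfl fun σ _ => ?_
        rw [integral_const_mul, integral_finset_sum _ (fun p _ => hint1 σ p)]
        congr 1
        exact Finset.sum_congr rfl fun p _ => integral_const_mul _ _
    _ = ∑ p ∈ (Finset.univ : Finset (Fin k → Fin d)),
          (((∏ i : Fin k, a (q i)) * ∏ i : Fin k, b (p i)) *
            ∑ σ : Equiv.Perm (Fin k), (Equiv.Perm.sign σ : ℂ) *
              ∫ U : G,
                ∏ i : Fin k, (mat U (q i) (p i) * (starRingEnd ℂ) (mat U (q (σ i)) (p i))) ∂μ) := by
        simp_rw [Finset.mul_sum]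
        rw [Finset.sum_comm]
        exact Finset.sum_congr rfl fun p _ => Finset.sum_congr rfl fun σ _ => by ring
    _ = ∑ p ∈ (Finset.univ : Finset (Fin k → Fin d)),
          (if Function.Injective p then
            (((∏ i : Fin k, a (q i)) * ∏ i : Fin k, b (p i)) *
              ((Nat.factorial (d - k) : ℂ) / (Nat.factorial d : ℂ))) else 0) := by
        refine Finset.sum_congr rfl fun p _ => ?_
        rw [hq p, mul_ite, mul_zero]
    _ = ∑ p ∈ Finset.univ.filter (fun p : Fin k → Fin d => Function.Injective p),
          (((∏ i : Fin k, a (q i)) * ∏ i : Fin k, b (p i)) *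
            ((Nat.factorial (d - k) : ℂ) / (Nat.factorial d : ℂ))) := (Finset.sum_filter _ _).symm
    _ = ((∏ i : Fin k, a (q i)) * ((Nat.factorial (d - k) : ℂ) / (Nat.factorial d : ℂ))) *
          ∑ p ∈ Finset.univ.filter (fun p : Fin k → Fin d => Function.Injective p),
            ∏ i : Fin k, b (p i) := by
        rw [Finset.mul_sum]
        exact Finset.sum_congr rfl fun p _ => by ring


lemma det_submatrix_coe (M : Matrix (Fin d) (Fin d) ℂ) {k : ℕ} (S : Finset (Fin d))
    (hS : S.card = k) :
    (M.submatrix (fun i : {x // x ∈ S} => (i : Fin d))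
        (fun j : {x // x ∈ S} => (j : Fin d))).det
      = (M.submatrix (⇑(S.orderEmbOfFin hS)) (⇑(S.orderEmbOfFin hS))).det := by
  rw [← Matrix.det_submatrix_equiv_self (S.orderIsoOfFin hS).toEquiv
    (M.submatrix (fun i : {x // x ∈ S} => (i : Fin d)) (fun j : {x // x ∈ S} => (j : Fin d))),
    Matrix.submatrix_submatrix]
  congr 1

lemma det_diag_submatrix (c : Fin d → ℂ) (S : Finset (Fin d)) :
    ((Matrix.diagonal c).submatrix (fun i : {x // x ∈ S} => (i : Fin d))
        (fun j : {x // x ∈ S} => (j : Fin d))).det = ∏ i ∈ S, c i := by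
  have h : (Matrix.diagonal c).submatrix (fun i : {x // x ∈ S} => (i : Fin d))
        (fun j : {x // x ∈ S} => (j : Fin d))
      = Matrix.diagonal (fun i : {x // x ∈ S} => c i) := by
    ext i j
    rw [Matrix.submatrix_apply, Matrix.diagonal_apply, Matrix.diagonal_apply]
    by_cases hij : i = j
    · rw [if_pos hij, if_pos (congrArg _ hij)]
    · rw [if_neg (fun hc => hij (Subtype.coe_injective hc)), if_neg hij]
  rw [h, Matrix.det_diagonal, Finset.prod_coe_sort]

lemma minorSum_diagonal (k : ℕ) (c : Fin d → ℂ) :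
    minorSum k (Matrix.diagonal c)
      = ∑ S ∈ Finset.powersetCard k (Finset.univ : Finset (Fin d)), ∏ i ∈ S, c i :=
  Finset.sum_congr rfl fun S _ => det_diag_submatrix c S

lemma continuous_conv (a b : Fin d → ℂ) :
    Continuous fun U : G => Matrix.diagonal a * mat U * Matrix.diagonal b * star (mat U) := by
  have h1 : Continuous fun U : G => mat U := continuous_matrix fun i j => continuous_mat i j
  exact ((continuous_const.matrix_mul h1).matrix_mul continuous_const).matrix_mul
    h1.matrix_conjTranspose

end QuadProof

open QuadProof in
/-- Symmetric multiplicative convolution via quadrature: the expected `e_k` of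
`A U B U*` for a compact subgroup with the quadrature property. -/
theorem quadrature_mul_esymm {d k : ℕ} (hk : k ≤ d)
    (G : Subgroup (Matrix.unitaryGroup (Fin d) ℂ)) [CompactSpace G]
    (μ : Measure G) [IsProbabilityMeasure μ] [μ.IsHaarMeasure]
    (hq : HasQuadrature G μ) (a b : Fin d → ℂ) :
    ∫ U : G,
        minorSum k (Matrix.diagonal a * mat U * Matrix.diagonal b * star (mat U)) ∂μ
      = ((Nat.factorial k : ℂ) * (Nat.factorial (d - k) : ℂ) / (Nat.factorial d : ℂ)) *
          minorSum k (Matrix.diagonal a) * minorSum k (Matrix.diagonal b) := by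
  simp only [minorSum]
  rw [integral_finset_sum _ (fun S _ => Continuous.integrable_of_hasCompactSupport
    (((continuous_conv a b).matrix_submatrix _ _).matrix_det)
    (HasCompactSupport.of_compactSpace _))]
  have hper : ∀ S ∈ Finset.powersetCard k (Finset.univ : Finset (Fin d)),
      ∫ U : G, ((Matrix.diagonal a * mat U * Matrix.diagonal b * star (mat U)).submatrix
          (fun i : {x // x ∈ S} => (i : Fin d)) (fun j : {x // x ∈ S} => (j : Fin d))).det ∂μ
        = ((∏ i ∈ S, a i) * ((Nat.factorial (d - k) : ℂ) / (Nat.factorial d : ℂ))) *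
            ∑ p ∈ Finset.univ.filter (fun p : Fin k → Fin d => Function.Injective p),
              ∏ i : Fin k, b (p i) := by
    intro S hSm
    have hc : S.card = k := (Finset.mem_powersetCard.mp hSm).2
    have hqc : QuadAt μ k ⇑(S.orderEmbOfFin hc) :=
      quadAt_of_injective hq hk (S.orderEmbOfFin hc).injective
    rw [show (fun U : G => ((Matrix.diagonal a * mat U * Matrix.diagonal b * star (mat U)).submatrix
          (fun i : {x // x ∈ S} => (i : Fin d)) (fun j : {x // x ∈ S} => (j : Fin d))).det)
        = fun U : G => ((Matrix.diagonal a * mat U * Matrix.diagonal b *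
            star (mat U)).submatrix (⇑(S.orderEmbOfFin hc)) (⇑(S.orderEmbOfFin hc))).det
      from funext fun U => det_submatrix_coe _ S hc]
    rw [integral_det_submatrix hqc a b, prod_orderEmbOfFin S hc a]
  rw [Finset.sum_congr rfl hper]
  rw [← Finset.sum_mul, ← Finset.sum_mul, sum_prod_injective b]
  rw [show (∑ S ∈ Finset.powersetCard k (Finset.univ : Finset (Fin d)),
      ((Matrix.diagonal a).submatrix (fun i : {x // x ∈ S} => (i : Fin d))
        (fun j : {x // x ∈ S} => (j : Fin d))).det)
    = ∑ S ∈ Finset.powersetCard k (Finset.univ : Finset (Fin d)), ∏ i ∈ S, a i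
    from Finset.sum_congr rfl fun S _ => det_diag_submatrix a S]
  rw [show (∑ S ∈ Finset.powersetCard k (Finset.univ : Finset (Fin d)),
      ((Matrix.diagonal b).submatrix (fun i : {x // x ∈ S} => (i : Fin d))
        (fun j : {x // x ∈ S} => (j : Fin d))).det)
    = ∑ S ∈ Finset.powersetCard k (Finset.univ : Finset (Fin d)), ∏ i ∈ S, b i
    from Finset.sum_congr rfl fun S _ => det_diag_submatrix b S]
  ring
end

section
/- For a compact subgroup G ≤ U_d with the quadrature property, diagonal matrices A = diag(a_1,...,a_d), B = diag(b_1,...,b_d), a subset S ⊆ [d] with |S| = k, and W = A U B U*, the expectation over U ∈ G of det(W(S,S)) equals det(A(S,S)) · (k!(d-k)!/d!) · e_k(B). -/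
open Finset MeasureTheory

/-! ### Auxiliary machinery -/

namespace QuadratureAux

open Matrix

variable {d k : ℕ}

/-- The matrix of conjugated entries appearing in the quadrature sums. -/
def Mb (X : Matrix (Fin d) (Fin d) ℂ) (r p : Fin k → Fin d) :
    Matrix (Fin k) (Fin k) ℂ :=
  Matrix.of fun a i => (starRingEnd ℂ) (X (r a) (p i))

/-- The pointwise integrand of the quadrature sums, in determinant form. -/
def Ff (X : Matrix (Fin d) (Fin d) ℂ) (r p : Fin k → Fin d) : ℂ :=
  (∏ i, X (r i) (p i)) * (Mb X r p).det

lemma Ff_eq_sum (X : Matrix (Fin d) (Fin d) ℂ) (r p : Fin k → Fin d) :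
    Ff X r p = ∑ σ : Equiv.Perm (Fin k), (Equiv.Perm.sign σ : ℂ) *
      ∏ i, (X (r i) (p i) * (starRingEnd ℂ) (X (r (σ i)) (p i))) := by
  unfold Ff
  rw [Matrix.det_apply', Finset.mul_sum]
  refine Finset.sum_congr rfl fun σ _ => ?_
  rw [Finset.prod_mul_distrib]
  simp only [Mb, Matrix.of_apply]
  ring

lemma Ff_relabel (X : Matrix (Fin d) (Fin d) ℂ) (r p : Fin k → Fin d)
    (π : Equiv.Perm (Fin k)) : Ff X (r ∘ π) (p ∘ π) = Ff X r p := by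
  unfold Ff
  have h1 : Mb X (r ∘ π) (p ∘ π) = (Mb X r p).submatrix π π := rfl
  rw [h1, Matrix.det_submatrix_equiv_self]
  congr 1
  exact Equiv.prod_comp π (fun i => X (r i) (p i))

lemma Ff_noninj (X : Matrix (Fin d) (Fin d) ℂ) (r p : Fin k → Fin d)
    (hp : ¬ Function.Injective p) : Ff X r p = 0 := by
  rw [Function.Injective] at hp
  push_neg at hp
  obtain ⟨i, j, hij, hne⟩ := hp
  have : (Mb X r p).det = 0 := by
    refine Matrix.det_zero_of_column_eq hne fun a => ?_
    simp [Mb, hij]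
  simp [Ff, this]

lemma det_updateColumn_sum' {n : Type*} [DecidableEq n] [Fintype n]
    (A : Matrix n n ℂ) (j : n) {ι : Type*} (s : Finset ι) (w : ι → n → ℂ) :
    (A.updateCol j (∑ m ∈ s, w m)).det = ∑ m ∈ s, (A.updateCol j (w m)).det := by
  induction s using Finset.cons_induction with
  | empty =>
      simp only [Finset.sum_empty]
      exact Matrix.det_eq_zero_of_column_eq_zero j (by simp)
  | cons a t ha ih =>
      simp only [Finset.sum_cons]
      rw [Matrix.det_updateCol_add, ih]

lemma Ff_contract (X : Matrix (Fin d) (Fin d) ℂ) (hX : X * star X = 1)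
    (r : Fin (k + 1) → Fin d) (hr : Function.Injective r) (p : Fin k → Fin d) :
    ∑ m : Fin d, Ff X r (Fin.cons m p) = Ff X (r ∘ Fin.succ) p := by
  classical
  set Base : Matrix (Fin (k + 1)) (Fin (k + 1)) ℂ :=
    Matrix.of fun a i =>
      Fin.cases (0 : ℂ) (fun i' => (starRingEnd ℂ) (X (r a) (p i'))) i with hBase
  have hMb : ∀ m : Fin d, Mb X r (Fin.cons m p) =
      Base.updateCol 0 (fun a => (starRingEnd ℂ) (X (r a) m)) := by
    intro m
    ext a i
    refine Fin.cases ?_ (fun i' => ?_) i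
    · simp [Mb, Base, Matrix.updateCol_self]
    · rw [Matrix.updateCol_ne (Fin.succ_ne_zero i')]
      simp [Mb, Base]
  have key : ∑ m : Fin d, X (r 0) m * (Mb X r (Fin.cons m p)).det
      = (Mb X (r ∘ Fin.succ) p).det := by
    have h2 : ∀ m : Fin d, X (r 0) m * (Mb X r (Fin.cons m p)).det
        = (Base.updateCol 0 (X (r 0) m • fun a => (starRingEnd ℂ) (X (r a) m))).det := by
      intro m
      rw [hMb m, Matrix.det_updateCol_smul]
    rw [Finset.sum_congr rfl fun m _ => h2 m, ← det_updateColumn_sum']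
    have h3 : (∑ m : Fin d, X (r 0) m • fun a => (starRingEnd ℂ) (X (r a) m))
        = fun a : Fin (k + 1) => if a = 0 then (1 : ℂ) else 0 := by
      funext a
      have : (∑ m : Fin d, X (r 0) m • fun a => (starRingEnd ℂ) (X (r a) m)) a
          = ∑ m : Fin d, X (r 0) m * (starRingEnd ℂ) (X (r a) m) := by
        simp [Finset.sum_apply]
      rw [this]
      have h4 : ∑ m : Fin d, X (r 0) m * (starRingEnd ℂ) (X (r a) m)
          = (X * star X) (r 0) (r a) := by
        rw [Matrix.mul_apply]
        refine Finset.sum_congr rfl fun m _ => ?_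
        simp [Matrix.star_apply]
      rw [h4, hX, Matrix.one_apply]
      by_cases h : a = 0
      · simp [h]
      · have : r 0 ≠ r a := fun hc => h (hr hc).symm
        simp [h, this]
    rw [h3]
    -- expand determinant along column `0`
    rw [Matrix.det_succ_column_zero]
    rw [Finset.sum_eq_single 0]
    · simp only [Matrix.updateCol_self, if_pos rfl, Fin.val_zero, pow_zero, one_mul]
      have h5 : (Base.updateCol 0 fun a => if a = 0 then (1 : ℂ) else 0).submatrix
          (Fin.succAbove 0) Fin.succ = Mb X (r ∘ Fin.succ) p := by
        ext a i
        rw [Fin.succAbove_zero]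
        simp only [Matrix.submatrix_apply]
        rw [Matrix.updateCol_ne (Fin.succ_ne_zero i)]
        simp [Base, Mb]
      rw [h5]
      simp
    · intro i _ hi
      simp only [Matrix.updateCol_self, if_neg hi]
      ring
    · intro h; exact absurd (Finset.mem_univ _) h
  calc ∑ m : Fin d, Ff X r (Fin.cons m p)
      = ∑ m : Fin d, (∏ i, X ((r ∘ Fin.succ) i) (p i)) *
          (X (r 0) m * (Mb X r (Fin.cons m p)).det) := by
        refine Finset.sum_congr rfl fun m _ => ?_
        unfold Ff
        rw [Fin.prod_univ_succ]
        simp only [Fin.cons_zero, Fin.cons_succ, Function.comp_apply]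
        ring
    _ = (∏ i, X ((r ∘ Fin.succ) i) (p i)) *
          ∑ m : Fin d, X (r 0) m * (Mb X r (Fin.cons m p)).det := by
        rw [Finset.mul_sum]
    _ = Ff X (r ∘ Fin.succ) p := by rw [key]; rfl

section Integral

variable (G : Subgroup (Matrix.unitaryGroup (Fin d) ℂ)) [CompactSpace G]
variable (μ : Measure G) [IsProbabilityMeasure μ]

instance : BorelSpace G := Subtype.borelSpace _

set_option linter.unusedSectionVars false

lemma continuous_mat : Continuous fun U : G => mat U :=
  continuous_subtype_val.comp continuous_subtype_val

lemma integrable_of_continuous {f : G → ℂ} (hf : Continuous f) : Integrable f μ := by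
  have h := hf.continuousOn.integrableOn_compact' (μ := μ) isCompact_univ
    MeasurableSet.univ
  rwa [integrableOn_univ] at h

lemma continuous_Ff (r p : Fin k → Fin d) : Continuous fun U : G => Ff (mat U) r p := by
  unfold Ff
  refine Continuous.mul ?_ ?_
  · exact continuous_finset_prod _ fun i _ => (continuous_mat G).matrix_elem _ _
  · refine Continuous.matrix_det (continuous_matrix fun a i => ?_)
    exact continuous_star.comp ((continuous_mat G).matrix_elem _ _)

/-- The quadrature integral. -/
noncomputable def QQ (r p : Fin k → Fin d) : ℂ := ∫ U : G, Ff (mat U) r p ∂μ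

lemma sum_eq (r p : Fin k → Fin d) :
    ∑ σ : Equiv.Perm (Fin k), (Equiv.Perm.sign σ : ℂ) *
      ∫ U : G, ∏ i : Fin k,
        (mat U (r i) (p i) * (starRingEnd ℂ) (mat U (r (σ i)) (p i))) ∂μ
    = QQ G μ r p := by
  unfold QQ
  have h1 : (fun U : G => Ff (mat U) r p)
      = fun U : G => ∑ σ : Equiv.Perm (Fin k), (Equiv.Perm.sign σ : ℂ) *
          ∏ i, (mat U (r i) (p i) * (starRingEnd ℂ) (mat U (r (σ i)) (p i))) := by
    funext U; exact Ff_eq_sum (mat U) r p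
  rw [h1, integral_finset_sum]
  · refine Finset.sum_congr rfl fun σ _ => ?_
    have := integral_smul (μ := μ) ((Equiv.Perm.sign σ : ℂ))
      (fun U : G => ∏ i, (mat U (r i) (p i) * (starRingEnd ℂ) (mat U (r (σ i)) (p i))))
    simp only [smul_eq_mul] at this
    rw [this]
  · intro σ _
    refine Integrable.const_mul ?_ _
    refine integrable_of_continuous G μ ?_
    refine continuous_finset_prod _ fun i _ => Continuous.mul ?_ ?_
    · exact (continuous_mat G).matrix_elem _ _
    · exact continuous_star.comp ((continuous_mat G).matrix_elem _ _)

lemma QQ_relabel (r p : Fin k → Fin d) (π : Equiv.Perm (Fin k)) :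
    QQ G μ (r ∘ π) (p ∘ π) = QQ G μ r p := by
  unfold QQ
  congr 1
  funext U
  exact Ff_relabel (mat U) r p π

lemma QQ_noninj (r p : Fin k → Fin d) (hp : ¬ Function.Injective p) :
    QQ G μ r p = 0 := by
  unfold QQ
  have : (fun U : G => Ff (mat U) r p) = fun _ : G => (0 : ℂ) :=
    funext fun U => Ff_noninj (mat U) r p hp
  rw [this, integral_const]
  simp

lemma QQ_contract (r : Fin (k + 1) → Fin d) (hr : Function.Injective r)
    (p : Fin k → Fin d) :
    QQ G μ (r ∘ Fin.succ) p = ∑ m : Fin d, QQ G μ r (Fin.cons m p) := by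
  unfold QQ
  rw [← integral_finset_sum _ (fun m _ => integrable_of_continuous G μ (continuous_Ff G _ _))]
  congr 1
  funext U
  have hU : mat U * star (mat U) = 1 :=
    Matrix.mem_unitaryGroup_iff.mp (U : Matrix.unitaryGroup (Fin d) ℂ).prop
  exact (Ff_contract (mat U) hU r hr p).symm

lemma QQ_gen (hq : HasQuadrature G μ) :
    ∀ (j k : ℕ), k + j = d → ∀ (r : Fin k → Fin d), Function.Injective r →
      ∀ p : Fin k → Fin d,
        QQ G μ r p = if Function.Injective p then
          (Nat.factorial (d - k) : ℂ) / (Nat.factorial d : ℂ) else 0 := by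
  intro j
  induction j with
  | zero =>
      intro k hkd r hr p
      have hk : k = d := by omega
      subst hk
      have hbij : Function.Bijective r := (Finite.injective_iff_bijective).mp hr
      set π : Equiv.Perm (Fin k) := Equiv.ofBijective r hbij with hπ
      have h1 : ((fun i : Fin k => i) ∘ π) = r := rfl
      have h2 : ((p ∘ ⇑π.symm) ∘ ⇑π) = p := by
        funext i; simp
      have h3 : QQ G μ r p = QQ G μ (fun i : Fin k => i) (p ∘ ⇑π.symm) := by
        rw [← QQ_relabel G μ (fun i : Fin k => i) (p ∘ ⇑π.symm) π, h1, h2]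
      have h4 := hq k le_rfl (p ∘ ⇑π.symm)
      have h5 : Fin.castLE (le_refl k) = fun i : Fin k => i := by
        funext i; rfl
      rw [h5] at h4
      rw [sum_eq] at h4
      rw [h3, h4]
      have h6 : Function.Injective (p ∘ ⇑π.symm) ↔ Function.Injective p :=
        Equiv.injective_comp π.symm p
      by_cases hp : Function.Injective p
      · rw [if_pos (h6.mpr hp), if_pos hp]
      · rw [if_neg (fun hc => hp (h6.mp hc)), if_neg hp]
  | succ j ih =>
      intro k hkd r hr p
      by_cases hp : Function.Injective p
      · have hkd' : k < d := by omega
        have hsur : ¬ Function.Surjective r := by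
          intro hs
          have := Fintype.card_le_of_surjective r hs
          simp only [Fintype.card_fin] at this
          omega
        rw [Function.Surjective] at hsur
        push_neg at hsur
        obtain ⟨m₀, hm₀⟩ := hsur
        have hm₀' : m₀ ∉ Set.range r := by
          rintro ⟨a, ha⟩; exact hm₀ a ha
        set r' : Fin (k + 1) → Fin d := Fin.cons m₀ r with hr'def
        have hr' : Function.Injective r' :=
          Fin.cons_injective_iff.mpr ⟨hm₀', hr⟩
        have hcomp : r' ∘ Fin.succ = r := by
          funext i; simp [hr'def]
        have step1 : QQ G μ r p = ∑ m : Fin d, QQ G μ r' (Fin.cons m p) := by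
          rw [← hcomp]; exact QQ_contract G μ r' hr' p
        have step2 : ∀ m : Fin d, QQ G μ r' (Fin.cons m p)
            = if m ∉ Set.range p then
                (Nat.factorial (d - (k + 1)) : ℂ) / (Nat.factorial d : ℂ) else 0 := by
          intro m
          rw [ih (k + 1) (by omega) r' hr' (Fin.cons m p)]
          by_cases hm : m ∉ Set.range p
          · rw [if_pos (Fin.cons_injective_iff.mpr ⟨hm, hp⟩), if_pos hm]
          · rw [if_neg, if_neg hm]
            intro hc
            exact hm (Fin.cons_injective_iff.mp hc).1
        have hcard : (Finset.univ.filter (fun m : Fin d => m ∉ Set.range p)).card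
            = d - k := by
          have hpos : (Finset.univ.filter (fun m : Fin d => m ∈ Set.range p)).card
              = k := by
            have himg : Finset.univ.filter (fun m : Fin d => m ∈ Set.range p)
                = Finset.image p Finset.univ := by
              ext m
              simp [Set.mem_range, eq_comm]
            rw [himg, Finset.card_image_of_injective _ hp, Finset.card_univ, Fintype.card_fin]
          have := Finset.card_filter_add_card_filter_not
            (s := (Finset.univ : Finset (Fin d)))
            (p := fun m : Fin d => m ∈ Set.range p)
          simp only [Finset.card_univ, Fintype.card_fin] at this
          omega
        rw [step1, Finset.sum_congr rfl (fun m _ => step2 m)]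
        rw [← Finset.sum_filter, Finset.sum_const, hcard, nsmul_eq_mul]
        rw [if_pos hp]
        have hdk : d - k = (d - (k + 1)) + 1 := by omega
        rw [hdk, Nat.factorial_succ]
        push_cast
        ring
      · rw [QQ_noninj G μ r p hp, if_neg hp]

/-- The generalized quadrature identity : arbitrary injective row indices. -/
lemma quadrature_general (hq : HasQuadrature G μ) (hk : k ≤ d)
    (r : Fin k → Fin d) (hr : Function.Injective r) (p : Fin k → Fin d) :
    ∑ σ : Equiv.Perm (Fin k), (Equiv.Perm.sign σ : ℂ) *
      ∫ U : G, ∏ i : Fin k,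
        (mat U (r i) (p i) * (starRingEnd ℂ) (mat U (r (σ i)) (p i))) ∂μ
    = if Function.Injective p then
        (Nat.factorial (d - k) : ℂ) / (Nat.factorial d : ℂ) else 0 := by
  rw [sum_eq]
  exact QQ_gen G μ hq (d - k) k (by omega) r hr p

end Integral

/-- Pointwise expansion of the minor of `A X B X*` into quadrature integrands. -/
lemma det_submatrix_expand (X : Matrix (Fin d) (Fin d) ℂ) (r : Fin k → Fin d)
    (a b : Fin d → ℂ) :
    ((Matrix.diagonal a * X * Matrix.diagonal b * star X).submatrix r r).det
    = (∏ i, a (r i)) * ∑ p : Fin k → Fin d, (∏ i, b (p i)) * Ff X r p := by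
  classical
  have hentry : (Matrix.diagonal a * X * Matrix.diagonal b * star X).submatrix r r
      = Matrix.of fun i j => a (r i) *
          (∑ m, X (r i) m * b m * (starRingEnd ℂ) (X (r j) m)) := by
    ext i j
    simp only [Matrix.submatrix_apply, Matrix.of_apply]
    rw [Matrix.mul_apply, Finset.mul_sum]
    refine Finset.sum_congr rfl fun m _ => ?_
    rw [Matrix.star_eq_conjTranspose, Matrix.conjTranspose_apply]
    rw [Matrix.mul_diagonal, Matrix.diagonal_mul]
    simp only [starRingEnd_apply]
    ring
  rw [hentry]
  have hdm := Matrix.det_mul_column (fun i => a (r i))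
    (Matrix.of fun i j => ∑ m, X (r i) m * b m * (starRingEnd ℂ) (X (r j) m) :
      Matrix (Fin k) (Fin k) ℂ)
  simp only [Matrix.of_apply] at hdm
  rw [hdm]
  congr 1
  rw [← Matrix.det_transpose, Matrix.det_apply']
  have hT : ∀ σ : Equiv.Perm (Fin k),
      (∏ i, (Matrix.of fun i j => ∑ m, X (r i) m * b m *
          (starRingEnd ℂ) (X (r j) m) : Matrix (Fin k) (Fin k) ℂ)ᵀ (σ i) i)
      = ∑ p : Fin k → Fin d,
          ∏ i, (X (r i) (p i) * b (p i) * (starRingEnd ℂ) (X (r (σ i)) (p i))) := by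
    intro σ
    have h0 : ∀ i : Fin k, (Matrix.of fun i j => ∑ m, X (r i) m * b m *
        (starRingEnd ℂ) (X (r j) m) : Matrix (Fin k) (Fin k) ℂ)ᵀ (σ i) i
        = ∑ m, X (r i) m * b m * (starRingEnd ℂ) (X (r (σ i)) m) := fun i => rfl
    rw [Finset.prod_congr rfl (fun i _ => h0 i), Finset.prod_univ_sum]
    rw [Fintype.piFinset_univ]
  calc (∑ σ : Equiv.Perm (Fin k), ((Equiv.Perm.sign σ : ℤ) : ℂ) *
        ∏ i, (Matrix.of fun i j => ∑ m, X (r i) m * b m *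
          (starRingEnd ℂ) (X (r j) m) : Matrix (Fin k) (Fin k) ℂ)ᵀ (σ i) i)
      = ∑ σ : Equiv.Perm (Fin k), ∑ p : Fin k → Fin d, ((Equiv.Perm.sign σ : ℤ) : ℂ) *
          ∏ i, (X (r i) (p i) * b (p i) * (starRingEnd ℂ) (X (r (σ i)) (p i))) := by
        refine Finset.sum_congr rfl fun σ _ => ?_
        rw [hT σ, Finset.mul_sum]
    _ = ∑ p : Fin k → Fin d, ∑ σ : Equiv.Perm (Fin k), ((Equiv.Perm.sign σ : ℤ) : ℂ) *
          ∏ i, (X (r i) (p i) * b (p i) * (starRingEnd ℂ) (X (r (σ i)) (p i))) :=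
        Finset.sum_comm
    _ = ∑ p : Fin k → Fin d, (∏ i, b (p i)) * Ff X r p := by
        refine Finset.sum_congr rfl fun p _ => ?_
        rw [Ff_eq_sum, Finset.mul_sum]
        refine Finset.sum_congr rfl fun σ _ => ?_
        have hprod : (∏ i, (X (r i) (p i) * b (p i) * (starRingEnd ℂ) (X (r (σ i)) (p i))))
            = (∏ i, b (p i)) *
              ∏ i, (X (r i) (p i) * (starRingEnd ℂ) (X (r (σ i)) (p i))) := by
          rw [← Finset.prod_mul_distrib]
          exact Finset.prod_congr rfl fun i _ => by ring
        rw [hprod]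
        ring

/-- The permutation sending `x` to the position of `p x` in the sorted image of `p`. -/
noncomputable def permTo {d k : ℕ} (p : Fin k → Fin d) (hp : Function.Injective p)
    (hcard : (Finset.image p Finset.univ).card = k) : Equiv.Perm (Fin k) :=
  Equiv.ofBijective
    (fun x => ((Finset.image p Finset.univ).orderIsoOfFin hcard).symm
      ⟨p x, Finset.mem_image_of_mem p (Finset.mem_univ x)⟩)
    (Finite.injective_iff_bijective.mp
      (fun x y hxy => hp (Subtype.ext_iff.mp
        (((Finset.image p Finset.univ).orderIsoOfFin hcard).symm.injective hxy))))

lemma permTo_spec {d k : ℕ} (p : Fin k → Fin d) (hp : Function.Injective p)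
    (hcard : (Finset.image p Finset.univ).card = k) (x : Fin k) :
    (Finset.image p Finset.univ).orderEmbOfFin hcard (permTo p hp hcard x) = p x := by
  unfold permTo
  rw [Equiv.ofBijective_apply, ← Finset.coe_orderIsoOfFin_apply, OrderIso.apply_symm_apply]

lemma card_image_univ {d k : ℕ} (p : Fin k → Fin d) (hp : Function.Injective p) :
    (Finset.image p Finset.univ).card = k := by
  rw [Finset.card_image_of_injective _ hp, Finset.card_univ, Fintype.card_fin]

lemma image_orderEmb {d k : ℕ} (T : Finset (Fin d)) (hcard : T.card = k)
    (σ : Equiv.Perm (Fin k)) :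
    Finset.image (⇑(T.orderEmbOfFin hcard) ∘ ⇑σ) Finset.univ = T := by
  ext m
  simp only [Finset.mem_image, Function.comp_apply, Finset.mem_univ, true_and]
  constructor
  · rintro ⟨y, rfl⟩
    exact Finset.orderEmbOfFin_mem T hcard _
  · intro hm
    have : m ∈ Set.range (T.orderEmbOfFin hcard) := by
      rw [Finset.range_orderEmbOfFin]
      exact hm
    obtain ⟨y, hy⟩ := this
    exact ⟨σ.symm y, by simp [hy]⟩

lemma prod_orderEmb {d k : ℕ} (T : Finset (Fin d)) (hcard : T.card = k) (f : Fin d → ℂ) :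
    ∏ j : Fin k, f (T.orderEmbOfFin hcard j) = ∏ m ∈ T, f m := by
  refine Finset.prod_nbij (fun j => T.orderEmbOfFin hcard j)
    (fun j _ => Finset.orderEmbOfFin_mem T hcard j)
    (fun x _ y _ h => (T.orderEmbOfFin hcard).injective h) ?_ (fun j _ => rfl)
  intro m hm
  have : m ∈ Set.range (T.orderEmbOfFin hcard) := by
    rw [Finset.range_orderEmbOfFin]
    exact hm
  obtain ⟨y, hy⟩ := this
  exact ⟨y, by simp, hy⟩

lemma sum_filter_injective {d k : ℕ} (f : Fin d → ℂ) :
    ∑ p ∈ Finset.univ.filter (fun p : Fin k → Fin d => Function.Injective p), ∏ j, f (p j)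
    = (Nat.factorial k : ℂ) *
        ∑ T ∈ Finset.powersetCard k (Finset.univ : Finset (Fin d)), ∏ m ∈ T, f m := by
  classical
  rw [Finset.mul_sum]
  have hconst : ∀ T ∈ Finset.powersetCard k (Finset.univ : Finset (Fin d)),
      (Nat.factorial k : ℂ) * ∏ m ∈ T, f m
      = ∑ _σ : Equiv.Perm (Fin k), ∏ m ∈ T, f m := by
    intro T _
    rw [Finset.sum_const, Finset.card_univ, Fintype.card_perm, Fintype.card_fin, nsmul_eq_mul]
  rw [Finset.sum_congr rfl hconst, ← Finset.sum_product']
  symm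
  refine Finset.sum_bij
    (fun x hx => ⇑(x.1.orderEmbOfFin
      (Finset.mem_powersetCard_univ.mp (Finset.mem_product.mp hx).1)) ∘ ⇑x.2)
    ?_ ?_ ?_ ?_
  · intro x hx
    rw [Finset.mem_filter]
    exact ⟨Finset.mem_univ _,
      (x.1.orderEmbOfFin _).injective.comp x.2.injective⟩
  · rintro ⟨T, σ⟩ hx ⟨T', σ'⟩ hx' heq
    have hc : T.card = k := Finset.mem_powersetCard_univ.mp (Finset.mem_product.mp hx).1
    have hc' : T'.card = k := Finset.mem_powersetCard_univ.mp (Finset.mem_product.mp hx').1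
    have heq' : ⇑(T.orderEmbOfFin hc) ∘ ⇑σ = ⇑(T'.orderEmbOfFin hc') ∘ ⇑σ' := heq
    have hTT : T = T' := by
      rw [← image_orderEmb T hc σ, ← image_orderEmb T' hc' σ', heq']
    subst hTT
    have hσ : σ = σ' := by
      refine Equiv.coe_fn_injective (funext fun j => ?_)
      exact (T.orderEmbOfFin hc).injective (congrFun heq' j)
    rw [hσ]
  · intro p hp
    have hpi := (Finset.mem_filter.mp hp).2
    refine ⟨(Finset.image p Finset.univ, permTo p hpi (card_image_univ p hpi)),
      Finset.mem_product.mpr ⟨Finset.mem_powersetCard_univ.mpr (card_image_univ p hpi),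
        Finset.mem_univ _⟩, ?_⟩
    funext x
    exact permTo_spec p hpi (card_image_univ p hpi) x
  · rintro ⟨T, σ⟩ hx
    have hc : T.card = k := Finset.mem_powersetCard_univ.mp (Finset.mem_product.mp hx).1
    calc ∏ m ∈ T, f m = ∏ j : Fin k, f (T.orderEmbOfFin hc j) := (prod_orderEmb T hc f).symm
      _ = ∏ j : Fin k, f (T.orderEmbOfFin hc (σ j)) :=
          (Equiv.prod_comp σ (fun i => f (T.orderEmbOfFin hc i))).symm
      _ = ∏ j : Fin k, f ((⇑(T.orderEmbOfFin hc) ∘ ⇑σ) j) := rfl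

/-- Determinant of a principal submatrix of a diagonal matrix. -/
lemma det_diag_submatrix {d : ℕ} (v : Fin d → ℂ) (T : Finset (Fin d)) :
    ((Matrix.diagonal v).submatrix (fun i : {x // x ∈ T} => (i : Fin d))
      (fun j : {x // x ∈ T} => (j : Fin d))).det = ∏ m ∈ T, v m := by
  classical
  have h : (Matrix.diagonal v).submatrix (fun i : {x // x ∈ T} => (i : Fin d))
      (fun j : {x // x ∈ T} => (j : Fin d))
      = Matrix.diagonal (fun x : {x // x ∈ T} => v x) := by
    ext i j
    by_cases hij : i = j
    · subst hij
      simp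
    · have hne : (i : Fin d) ≠ (j : Fin d) := fun hc => hij (Subtype.ext hc)
      simp [Matrix.diagonal_apply_ne _ hne, Matrix.diagonal_apply_ne _ hij]
  rw [h, Matrix.det_diagonal]
  exact Finset.prod_coe_sort T v

end QuadratureAux

/-- For a compact subgroup with the quadrature property, the expected principal minor of
`W = A U B U*` on a set `S` of size `k` equals `det(A(S,S)) · (k!(d-k)!/d!) · e_k(B)`. -/
theorem quadrature_expected_minor_mul {d k : ℕ} (hk : k ≤ d)
    (G : Subgroup (Matrix.unitaryGroup (Fin d) ℂ)) [CompactSpace G]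
    (μ : Measure G) [IsProbabilityMeasure μ] [μ.IsHaarMeasure]
    (hq : HasQuadrature G μ) (a b : Fin d → ℂ)
    (S : Finset (Fin d)) (hS : S.card = k) :
    ∫ U : G,
        ((Matrix.diagonal a * mat U * Matrix.diagonal b * star (mat U)).submatrix
          (fun i : {x // x ∈ S} => (i : Fin d)) (fun j : {x // x ∈ S} => (j : Fin d))).det ∂μ
      = ((Matrix.diagonal a).submatrix
            (fun i : {x // x ∈ S} => (i : Fin d)) (fun j : {x // x ∈ S} => (j : Fin d))).det *
          ((Nat.factorial k : ℂ) * (Nat.factorial (d - k) : ℂ) / (Nat.factorial d : ℂ)) *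
          minorSum k (Matrix.diagonal b) := by
  classical
  set r : Fin k → Fin d := fun i => ((S.orderIsoOfFin hS i : {x // x ∈ S}) : Fin d) with hrdef
  have hr : Function.Injective r := fun i j hij =>
    (S.orderIsoOfFin hS).injective (Subtype.ext hij)
  have hpoint : (fun U : G =>
        ((Matrix.diagonal a * mat U * Matrix.diagonal b * star (mat U)).submatrix
          (fun i : {x // x ∈ S} => (i : Fin d)) (fun j : {x // x ∈ S} => (j : Fin d))).det)
      = fun U : G => (∏ i, a (r i)) *
          ∑ p : Fin k → Fin d, (∏ i, b (p i)) * QuadratureAux.Ff (mat U) r p := by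
    funext U
    rw [← Matrix.det_submatrix_equiv_self (S.orderIsoOfFin hS).toEquiv,
      Matrix.submatrix_submatrix]
    exact QuadratureAux.det_submatrix_expand (mat U) r a b
  rw [hpoint]
  have h1 : ∫ U : G, (∏ i, a (r i)) *
        (∑ p : Fin k → Fin d, (∏ i, b (p i)) * QuadratureAux.Ff (mat U) r p) ∂μ
      = (∏ i, a (r i)) * ∫ U : G,
        (∑ p : Fin k → Fin d, (∏ i, b (p i)) * QuadratureAux.Ff (mat U) r p) ∂μ := by
    simpa [smul_eq_mul] using integral_smul (μ := μ) (∏ i, a (r i))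
      (fun U : G => ∑ p : Fin k → Fin d, (∏ i, b (p i)) * QuadratureAux.Ff (mat U) r p)
  rw [h1, integral_finset_sum _ (fun p _ =>
    (QuadratureAux.integrable_of_continuous G μ
      (QuadratureAux.continuous_Ff G r p)).const_mul _)]
  have h2 : ∀ p : Fin k → Fin d,
      ∫ U : G, (∏ i, b (p i)) * QuadratureAux.Ff (mat U) r p ∂μ
      = (∏ i, b (p i)) * QuadratureAux.QQ G μ r p := by
    intro p
    simpa [smul_eq_mul, QuadratureAux.QQ] using integral_smul (μ := μ) (∏ i, b (p i))
      (fun U : G => QuadratureAux.Ff (mat U) r p)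
  rw [Finset.sum_congr rfl fun p _ => h2 p]
  rw [Finset.sum_congr rfl fun p _ => by
    rw [QuadratureAux.QQ_gen G μ hq (d - k) k (by omega) r hr p]]
  have h3 : ∑ p : Fin k → Fin d, (∏ i, b (p i)) *
        (if Function.Injective p then
          ((d - k).factorial : ℂ) / (d.factorial : ℂ) else 0)
      = ((k.factorial : ℂ) *
          ∑ T ∈ Finset.powersetCard k (Finset.univ : Finset (Fin d)), ∏ m ∈ T, b m) *
        (((d - k).factorial : ℂ) / (d.factorial : ℂ)) := by
    rw [← QuadratureAux.sum_filter_injective (k := k) b, Finset.sum_mul, Finset.sum_filter]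
    refine Finset.sum_congr rfl fun p _ => ?_
    by_cases hp : Function.Injective p <;> simp [hp]
  rw [h3]
  have h4 : ((Matrix.diagonal a).submatrix
        (fun i : {x // x ∈ S} => (i : Fin d)) (fun j : {x // x ∈ S} => (j : Fin d))).det
      = ∏ i, a (r i) := by
    rw [QuadratureAux.det_diag_submatrix a S]
    calc ∏ m ∈ S, a m = ∏ x : {x // x ∈ S}, a x := (Finset.prod_coe_sort S a).symm
      _ = ∏ i, a (r i) :=
          (Equiv.prod_comp (S.orderIsoOfFin hS).toEquiv
            (fun x : {x // x ∈ S} => a x)).symm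
  have h5 : minorSum k (Matrix.diagonal b)
      = ∑ T ∈ Finset.powersetCard k (Finset.univ : Finset (Fin d)), ∏ m ∈ T, b m := by
    unfold minorSum
    exact Finset.sum_congr rfl fun T _ => QuadratureAux.det_diag_submatrix b T
  rw [h4, h5]
  ring
end
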